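/- arXiv:2201.05260 — 4 statements merged into one kernel-verified Lean document; each statement's English description precedes it below -/
import Mathlib

section
/- Let 1 ≤ p ≤ q and 0 ≤ a ≤ p, and set N = p + q. In ℤ^N, define S to be the set of vectors e_i − e_j with 1 ≤ i ≤ a and p+q−a+1 ≤ j ≤ p+q, together with the vectors −e_i + e_j with a+1 ≤ i ≤ p and p+1 ≤ j ≤ p+q−a. Let w be the linear map induced by the permutation of {1,…,p+q} sending i ↦ p+1−i for i ≤ p and i ↦ 2p+q+1−i for i > p. Then w(S) ∩ S = ∅ if and only if p ≤ 2a and 2a ≤ q. -/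
/-!
Write `S = {e_i - e_j | R i j}` for a relation `R` on the indices that never relates an index to
itself. Since `σ` is an involution, `w (e_i - e_j) = e_{σ i} - e_{σ j}`, and a vector `e_i - e_j`
with `i ≠ j` determines the pair `(i, j)`; hence `w(S) ∩ S = ∅` iff `σ × σ` maps no pair of `R` into
`R`. As `σ` preserves the two blocks, it can only map a vector `e_i - e_j` with `i ≤ a`,
`j > p + q - a` to another such vector, which happens iff `2a` exceeds both `p` and `q`, or a vector
`e_j - e_i` with `a < i ≤ p < j ≤ p + q - a` to another such vector, which happens iff `2a` is
below both `p` and `q`. Since `p ≤ q`, one of the two holds iff `p ≤ 2a ≤ q` fails.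
-/

open Function Set

section Roots

variable {ι : Type*} [DecidableEq ι]

theorem single_sub_single_eq_single_sub_single_iff {i j k l : ι} (hij : i ≠ j) :
    (Pi.single i 1 - Pi.single j 1 : ι → ℤ) = Pi.single k 1 - Pi.single l 1 ↔ i = k ∧ j = l := by
  simp only [sub_eq_add_neg, ← Pi.single_neg]
  rw [Pi.single_add_single_eq_single_add_single one_ne_zero (neg_ne_zero.2 one_ne_zero)]
  norm_num [hij]

theorem Pi.single_comp_of_involutive {M : Type*} [Zero M] {σ : ι → ι} (hσ : Involutive σ)
    (i : ι) (x : M) : Pi.single i x ∘ σ = Pi.single (σ i) x :=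
  Pi.single_comp_equiv (hσ.toPerm σ) i x

theorem image_comp_inter_eq_empty_iff {σ : ι → ι} (hσ : Involutive σ) {r : ι → ι → Prop}
    (hr : ∀ i j, r i j → i ≠ j) :
    (· ∘ σ) '' {v : ι → ℤ | ∃ i j, r i j ∧ v = Pi.single i 1 - Pi.single j 1} ∩
        {v | ∃ i j, r i j ∧ v = Pi.single i 1 - Pi.single j 1} = ∅ ↔
      ∀ i j, r i j → ¬ r (σ i) (σ j) := by
  have hroot : ∀ i j, (Pi.single i 1 - Pi.single j 1 : ι → ℤ) ∘ σ =
      Pi.single (σ i) 1 - Pi.single (σ j) 1 := fun i j => by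
    rw [Pi.sub_comp, Pi.single_comp_of_involutive hσ, Pi.single_comp_of_involutive hσ]
  simp only [eq_empty_iff_forall_notMem, mem_inter_iff, mem_image, mem_ofPred_eq]
  constructor
  · intro h i j hij hσij
    exact h _ ⟨⟨_, ⟨i, j, hij, rfl⟩, hroot i j⟩, σ i, σ j, hσij, rfl⟩
  · rintro h _ ⟨⟨_, ⟨i, j, hij, rfl⟩, rfl⟩, k, l, hkl, hv⟩
    rw [hroot, single_sub_single_eq_single_sub_single_iff (hσ.injective.ne (hr i j hij))] at hv
    obtain ⟨rfl, rfl⟩ := hv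
    exact h i j hij hkl

end Roots

def blockReversal (p q : ℕ) (k : Fin (p + q)) : Fin (p + q) :=
  ⟨if (k : ℕ) < p then p - 1 - k else 2 * p + q - 1 - k, by split_ifs <;> omega⟩

/-- The pairs `(i, j)` with `e_i - e_j ∈ S`; the second disjunct lists the vectors `-e_j + e_i`
of `S`, with the names of the indices swapped. -/
def IsNegNoncompactPair (p q a : ℕ) (i j : Fin (p + q)) : Prop :=
  ((i : ℕ) < a ∧ p + q - a ≤ (j : ℕ)) ∨ (p ≤ (i : ℕ) ∧ (i : ℕ) < p + q - a ∧ a ≤ (j : ℕ) ∧ (j : ℕ) < p)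

theorem union_setOf_eq_setOf_isNegNoncompactPair (p q a : ℕ) :
    {v : Fin (p + q) → ℤ | ∃ i j : Fin (p + q), (i : ℕ) < a ∧ p + q - a ≤ (j : ℕ) ∧
        v = Pi.single i 1 - Pi.single j 1} ∪
      {v | ∃ i j : Fin (p + q), a ≤ (i : ℕ) ∧ (i : ℕ) < p ∧ p ≤ (j : ℕ) ∧ (j : ℕ) < p + q - a ∧
        v = -Pi.single i 1 + Pi.single j 1} =
      {v | ∃ i j, IsNegNoncompactPair p q a i j ∧ v = Pi.single i 1 - Pi.single j 1} := by
  ext v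
  simp only [mem_union, mem_ofPred_eq, IsNegNoncompactPair, neg_add_eq_sub]
  aesop

section BlockReversal

variable {p q a : ℕ}

theorem blockReversal_val (k : Fin (p + q)) :
    (blockReversal p q k : ℕ) = if (k : ℕ) < p then p - 1 - k else 2 * p + q - 1 - k :=
  rfl

theorem blockReversal_involutive : Involutive (blockReversal p q) := by
  intro k
  have := k.isLt
  ext
  simp only [blockReversal_val]
  split_ifs <;> omega

theorem IsNegNoncompactPair.ne (h : 2 * a ≤ p + q) {i j : Fin (p + q)}
    (hij : IsNegNoncompactPair p q a i j) : i ≠ j := by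
  rintro rfl
  unfold IsNegNoncompactPair at hij
  omega

theorem exists_isNegNoncompactPair_blockReversal_iff (ha : a ≤ p) (hpq : p ≤ q) :
    (∃ i j, IsNegNoncompactPair p q a i j ∧
      IsNegNoncompactPair p q a (blockReversal p q i) (blockReversal p q j)) ↔
      2 * a < p ∨ q < 2 * a := by
  constructor
  · rintro ⟨i, j, hij, hσij⟩
    have := i.isLt
    have := j.isLt
    unfold IsNegNoncompactPair at hij hσij
    simp only [blockReversal_val] at hσij
    split_ifs at hσij <;> omega
  · rintro (h | h)
    · refine ⟨⟨p + a, by omega⟩, ⟨a, by omega⟩, ?_⟩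
      simp only [IsNegNoncompactPair, blockReversal_val]
      split_ifs <;> omega
    · refine ⟨⟨a - 1, by omega⟩, ⟨p + q - a, by omega⟩, ?_⟩
      simp only [IsNegNoncompactPair, blockReversal_val]
      split_ifs <;> omega

end BlockReversal

/-- Indices are 0-based: `k : Fin (p + q)` stands for the index `k + 1` of the informal
statement. -/
theorem stmt_2_general (p q a : ℕ) (hpq : p ≤ q) (ha : a ≤ p)
    (e : Fin (p + q) → Fin (p + q) → ℤ)
    (he : ∀ i k, e i k = if k = i then 1 else 0)
    (S : Set (Fin (p + q) → ℤ))
    (hS : S = {v | ∃ i j : Fin (p + q), (i : ℕ) < a ∧ p + q - a ≤ (j : ℕ) ∧ v = e i - e j} ∪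
              {v | ∃ i j : Fin (p + q), a ≤ (i : ℕ) ∧ (i : ℕ) < p ∧
                    p ≤ (j : ℕ) ∧ (j : ℕ) < p + q - a ∧ v = -(e i) + e j})
    (σ : Fin (p + q) → Fin (p + q))
    (hσ : ∀ k, (σ k : ℕ) = if (k : ℕ) < p then p - 1 - (k : ℕ) else 2 * p + q - 1 - (k : ℕ))
    (w : (Fin (p + q) → ℤ) → (Fin (p + q) → ℤ))
    (hw : ∀ v k, w v k = v (σ k)) :
    (w '' S) ∩ S = ∅ ↔ (p ≤ 2 * a ∧ 2 * a ≤ q) := by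
  obtain rfl : e = fun i => Pi.single i 1 := by
    funext i k
    rw [he, Pi.single_apply]
  obtain rfl : σ = blockReversal p q := funext fun k => Fin.ext (hσ k)
  obtain rfl : w = (· ∘ blockReversal p q) := funext fun v => funext (hw v)
  beta_reduce at hS
  rw [hS, union_setOf_eq_setOf_isNegNoncompactPair,
    image_comp_inter_eq_empty_iff blockReversal_involutive fun i j h => h.ne (by omega)]
  simpa only [not_exists, not_and, not_or, not_lt] using
    (exists_isNegNoncompactPair_blockReversal_iff ha hpq).not

/-- combinatorial core of Theorem 3.4 (type AIII).
Indices are 0-based in `Fin (p+q)` (0-based `k` stands for 1-based `k+1`).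
`σ` is the permutation reversing the first `p` indices among themselves and the last
`q` indices among themselves; `w` is the induced linear map (note `σ` is an involution). -/
theorem stmt_2 (p q a : ℕ) (hp : 1 ≤ p) (hpq : p ≤ q) (ha : a ≤ p)
    (e : Fin (p + q) → Fin (p + q) → ℤ)
    (he : ∀ i k, e i k = if k = i then 1 else 0)
    (S : Set (Fin (p + q) → ℤ))
    (hS : S = {v | ∃ i j : Fin (p + q), (i : ℕ) < a ∧ p + q - a ≤ (j : ℕ) ∧ v = e i - e j} ∪
              {v | ∃ i j : Fin (p + q), a ≤ (i : ℕ) ∧ (i : ℕ) < p ∧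
                    p ≤ (j : ℕ) ∧ (j : ℕ) < p + q - a ∧ v = -(e i) + e j})
    (σ : Fin (p + q) → Fin (p + q))
    (hσ : ∀ k, (σ k : ℕ) = if (k : ℕ) < p then p - 1 - (k : ℕ) else 2 * p + q - 1 - (k : ℕ))
    (w : (Fin (p + q) → ℤ) → (Fin (p + q) → ℤ))
    (hw : ∀ v k, w v k = v (σ k)) :
    (w '' S) ∩ S = ∅ ↔ (p ≤ 2 * a ∧ 2 * a ≤ q) :=
  stmt_2_general p q a hpq ha e he S hS σ hσ w hw
end

section
/- Let 1 ≤ p ≤ q, 0 ≤ a ≤ p with p ≤ 2a ≤ q, and N = p+q. Define S' ⊂ ℤ^N as the union of: (i) the vectors e_i − e_j with 1 ≤ i ≤ a and p+q−a+1 ≤ j ≤ p+q; (ii) the vectors −e_i + e_j with a+1 ≤ i ≤ p and p+1 ≤ j ≤ p+q−a; and (iii) the vectors e_i − e_j with a+1 ≤ i ≤ p and p+q−a+1 ≤ j ≤ p+q. Let w be the permutation-induced linear map sending i ↦ p+1−i for i ≤ p and i ↦ 2p+q+1−i for i > p. Then w(S') ∩ S' = ∅. -/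
/-!
Write every vector of `S'` as `e i - e j` with `i ≠ j`; its unique `-1` entry sits at `j`, and `j`
always lies in one of the blocks `[a, p)` and `[p+q-a, p+q)`. Since `w v = v ∘ σ`, the `-1` entry of
`w (e i - e j)` sits at an index `j'` with `σ j' = j`. The reversal `σ` sends `[a, p)` into
`[0, a)` (as `p ≤ 2a`) and `[p+q-a, p+q)` into `[p, p+q-a)` (as `2a ≤ q`), so `j'` and `σ j'` cannot
both lie in those two blocks, and `w v` is never in `S'`.
-/

lemma Pi.single_sub_single_apply_eq_neg_one_iff {ι : Type*} [DecidableEq ι] {i j : ι}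
    (hij : i ≠ j) (k : ι) : (Pi.single i 1 - Pi.single j 1 : ι → ℤ) k = -1 ↔ k = j := by
  by_cases hkj : k = j
  · simp [hkj, hij]
  · by_cases hki : k = i
    · simp [hki, hij]
    · simp [hki, hkj]

/-- The `-1` entry of every vector of `S'` sits at such an index. -/
def NegIndex (p q a k : ℕ) : Prop :=
  (a ≤ k ∧ k < p) ∨ p + q - a ≤ k

lemma not_negIndex_reverse {p q a k : ℕ} (h1 : p ≤ 2 * a) (h2 : 2 * a ≤ q) (hk : k < p + q)
    (h : NegIndex p q a k) :
    ¬ NegIndex p q a (if k < p then p - 1 - k else 2 * p + q - 1 - k) := by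
  unfold NegIndex at *
  split_ifs <;> omega

lemma exists_eq_single_sub_single_of_mem {p q a : ℕ} (h2 : 2 * a ≤ q) {v : Fin (p + q) → ℤ}
    (hv : v ∈
        {v | ∃ i j : Fin (p + q), (i : ℕ) < a ∧ p + q - a ≤ (j : ℕ) ∧
              v = Pi.single i 1 - Pi.single j 1} ∪
        {v | ∃ i j : Fin (p + q), a ≤ (i : ℕ) ∧ (i : ℕ) < p ∧
              p ≤ (j : ℕ) ∧ (j : ℕ) < p + q - a ∧ v = -Pi.single i 1 + Pi.single j 1} ∪
        {v | ∃ i j : Fin (p + q), a ≤ (i : ℕ) ∧ (i : ℕ) < p ∧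
              p + q - a ≤ (j : ℕ) ∧ v = Pi.single i 1 - Pi.single j 1}) :
    ∃ i j : Fin (p + q), i ≠ j ∧ NegIndex p q a j ∧ v = Pi.single i 1 - Pi.single j 1 := by
  rcases hv with (⟨i, j, hi, hj, rfl⟩ | ⟨i, j, hi, hi', hj, hj', rfl⟩) | ⟨i, j, hi, hi', hj, rfl⟩
  · exact ⟨i, j, Fin.ne_of_lt (by omega), Or.inr hj, rfl⟩
  · exact ⟨j, i, Fin.ne_of_gt (by omega), Or.inl ⟨hi, hi'⟩, neg_add_eq_sub _ _⟩
  · exact ⟨i, j, Fin.ne_of_lt (by omega), Or.inr hj, rfl⟩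

theorem stmt_3_general (p q a : ℕ)
    (h1 : p ≤ 2 * a) (h2 : 2 * a ≤ q)
    (e : Fin (p + q) → Fin (p + q) → ℤ)
    (he : ∀ i k, e i k = if k = i then 1 else 0)
    (S' : Set (Fin (p + q) → ℤ))
    (hS' : S' =
        {v | ∃ i j : Fin (p + q), (i : ℕ) < a ∧ p + q - a ≤ (j : ℕ) ∧ v = e i - e j} ∪
        {v | ∃ i j : Fin (p + q), a ≤ (i : ℕ) ∧ (i : ℕ) < p ∧
              p ≤ (j : ℕ) ∧ (j : ℕ) < p + q - a ∧ v = -(e i) + e j} ∪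
        {v | ∃ i j : Fin (p + q), a ≤ (i : ℕ) ∧ (i : ℕ) < p ∧
              p + q - a ≤ (j : ℕ) ∧ v = e i - e j})
    (σ : Fin (p + q) → Fin (p + q))
    (hσ : ∀ k, (σ k : ℕ) = if (k : ℕ) < p then p - 1 - (k : ℕ) else 2 * p + q - 1 - (k : ℕ))
    (w : (Fin (p + q) → ℤ) → (Fin (p + q) → ℤ))
    (hw : ∀ v k, w v k = v (σ k)) :
    (w '' S') ∩ S' = ∅ := by
  obtain rfl : e = fun i => Pi.single i 1 := by
    funext i k
    rw [he, Pi.single_apply]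
  subst hS'
  rw [Set.eq_empty_iff_forall_notMem]
  rintro _ ⟨⟨v, hv, rfl⟩, hwv⟩
  obtain ⟨i, j, hij, hj, rfl⟩ := exists_eq_single_sub_single_of_mem h2 hv
  obtain ⟨i', j', hij', hj', hwv_eq⟩ := exists_eq_single_sub_single_of_mem h2 hwv
  have hσj' : σ j' = j := by
    have := (Pi.single_sub_single_apply_eq_neg_one_iff hij' j').2 rfl
    rwa [← hwv_eq, hw, Pi.single_sub_single_apply_eq_neg_one_iff hij] at this
  exact not_negIndex_reverse h1 h2 j'.isLt hj' (hσ j' ▸ hσj' ▸ hj)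

/-- Proposition 3.5, domain `D_s` (type AIII). `S'` is the union of the
three families (i),(ii),(iii), and `w` is the induced map of the permutation reversing
the first `p` and the last `q` indices among themselves (0-based indexing). -/
theorem stmt_3 (p q a : ℕ) (hp : 1 ≤ p) (hpq : p ≤ q) (ha : a ≤ p)
    (h1 : p ≤ 2 * a) (h2 : 2 * a ≤ q)
    (e : Fin (p + q) → Fin (p + q) → ℤ)
    (he : ∀ i k, e i k = if k = i then 1 else 0)
    (S' : Set (Fin (p + q) → ℤ))
    (hS' : S' =
        {v | ∃ i j : Fin (p + q), (i : ℕ) < a ∧ p + q - a ≤ (j : ℕ) ∧ v = e i - e j} ∪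
        {v | ∃ i j : Fin (p + q), a ≤ (i : ℕ) ∧ (i : ℕ) < p ∧
              p ≤ (j : ℕ) ∧ (j : ℕ) < p + q - a ∧ v = -(e i) + e j} ∪
        {v | ∃ i j : Fin (p + q), a ≤ (i : ℕ) ∧ (i : ℕ) < p ∧
              p + q - a ≤ (j : ℕ) ∧ v = e i - e j})
    (σ : Fin (p + q) → Fin (p + q))
    (hσ : ∀ k, (σ k : ℕ) = if (k : ℕ) < p then p - 1 - (k : ℕ) else 2 * p + q - 1 - (k : ℕ))
    (w : (Fin (p + q) → ℤ) → (Fin (p + q) → ℤ))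
    (hw : ∀ v k, w v k = v (σ k)) :
    (w '' S') ∩ S' = ∅ :=
  stmt_3_general p q a h1 h2 e he S' hS' σ hσ w hw
end

section
/- Let n ≥ 1 and 0 ≤ a ≤ n, and let w be the index-reversal permutation i ↦ n+1−i of {1,…,n}, acting linearly on ℤⁿ. Let S⁺ = {e_i + e_j : 1 ≤ i ≤ j ≤ a} and S⁻ = {−e_i − e_j : a+1 ≤ i ≤ j ≤ n}. Then: (i) w(S⁺) ∩ S⁺ = ∅ if and only if 2a ≤ n; (ii) w(S⁻) ∩ S⁻ = ∅ if and only if 2a ≥ n; (iii) w(S⁺) ∩ S⁻ = ∅ and w(S⁻) ∩ S⁺ = ∅ always. -/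
/-!
Every vector of `S⁺` is nonnegative, nonzero and supported on the first `a` coordinates; every
vector of `S⁻` is nonpositive, nonzero and supported on the last `n - a`. The reversal `w` only
permutes coordinates, so it preserves signs, which gives (iii). If `v` and `w v` are both supported
on the first `a` coordinates, then for any `k` in the support of `v` both `k` and `n - 1 - k` are
below `a`, forcing `2a > n`; conversely, when `2a > n` the vector `2 e_a` (1-based) is reversed
into `S⁺`. The argument for `S⁻` is symmetric, with `2 e_{a+1}`.
-/

open Function

section

variable {ι κ M : Type*}

lemma Function.Surjective.comp_nonpos_iff [Zero M] [Preorder M] {f : ι → κ} (hf : Surjective f)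
    {u : κ → M} : u ∘ f ≤ 0 ↔ u ≤ 0 :=
  (hf.forall (p := fun k => u k ≤ 0)).symm

lemma Function.Surjective.comp_nonneg_iff [Zero M] [Preorder M] {f : ι → κ} (hf : Surjective f)
    {u : κ → M} : 0 ≤ u ∘ f ↔ 0 ≤ u :=
  (hf.forall (p := fun k => 0 ≤ u k)).symm

lemma comp_image_inter_eq_empty_of_support [Zero M] {f : ι → ι} (hf : Involutive f)
    {S T : Set (ι → M)} {s t : Set ι} (hS : ∀ v ∈ S, v ≠ 0 ∧ support v ⊆ s)
    (hT : ∀ v ∈ T, support v ⊆ t) (hst : ∀ k ∈ s, f k ∉ t) :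
    (· ∘ f) '' S ∩ T = ∅ := by
  refine Set.eq_empty_of_forall_notMem ?_
  rintro _ ⟨⟨u, hu, rfl⟩, huT⟩
  obtain ⟨k, hk⟩ := Function.ne_iff.1 (hS u hu).1
  have hfk : f k ∈ support (u ∘ f) := by simpa [hf k] using hk
  exact hst k ((hS u hu).2 hk) (hT _ huT hfk)

lemma single_add_single_pos [DecidableEq ι] (i j : ι) :
    0 < (Pi.single i 1 + Pi.single j 1 : ι → ℤ) := by
  refine lt_of_le_of_ne (add_nonneg (Pi.single_nonneg.2 zero_le_one)
    (Pi.single_nonneg.2 zero_le_one)) fun h => ?_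
  have := congrFun h i
  by_cases hij : i = j <;> simp_all

lemma support_single_add_single_subset [DecidableEq ι] (i j : ι) :
    support (Pi.single i 1 + Pi.single j 1 : ι → ℤ) ⊆ {i, j} := by
  refine (support_add _ _).trans ?_
  rintro k (hk | hk)
  · exact Or.inl (Pi.support_single_subset hk)
  · exact Or.inr (Pi.support_single_subset hk)

end

lemma Fin.single_comp_rev {n : ℕ} (x : Fin n) :
    (Pi.single x 1 : Fin n → ℤ) ∘ Fin.rev = Pi.single x.rev 1 := by
  have := Pi.single_comp_equiv Fin.revPerm x (1 : ℤ)
  rwa [Fin.revPerm_symm] at this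

/-- `S⁺`, with 0-based indices. -/
def posRoots (n a : ℕ) : Set (Fin n → ℤ) :=
  {v | ∃ i j : Fin n, i ≤ j ∧ (j : ℕ) < a ∧ v = Pi.single i 1 + Pi.single j 1}

/-- `S⁻`, with 0-based indices. -/
def negRoots (n a : ℕ) : Set (Fin n → ℤ) :=
  {v | ∃ i j : Fin n, a ≤ (i : ℕ) ∧ i ≤ j ∧ v = -Pi.single i 1 - Pi.single j 1}

variable {n a : ℕ}

namespace posRoots

lemma pos {v : Fin n → ℤ} (hv : v ∈ posRoots n a) : 0 < v := by
  obtain ⟨i, j, -, -, rfl⟩ := hv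
  exact single_add_single_pos i j

lemma support_subset {v : Fin n → ℤ} (hv : v ∈ posRoots n a) :
    support v ⊆ {k | (k : ℕ) < a} := by
  obtain ⟨i, j, hij, hj, rfl⟩ := hv
  refine (support_single_add_single_subset i j).trans ?_
  rintro k (rfl | rfl)
  · exact lt_of_le_of_lt (Fin.le_def.1 hij) hj
  · exact hj

lemma single_add_single_mem {x : Fin n} (hx : (x : ℕ) < a) :
    Pi.single x 1 + Pi.single x 1 ∈ posRoots n a :=
  ⟨x, x, le_rfl, hx, rfl⟩

end posRoots

namespace negRoots

lemma neg {v : Fin n → ℤ} (hv : v ∈ negRoots n a) : v < 0 := by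
  obtain ⟨i, j, -, -, rfl⟩ := hv
  rw [← neg_add']
  exact neg_neg_iff_pos.2 (single_add_single_pos i j)

lemma support_subset {v : Fin n → ℤ} (hv : v ∈ negRoots n a) :
    support v ⊆ {k | a ≤ (k : ℕ)} := by
  obtain ⟨i, j, hi, hij, rfl⟩ := hv
  rw [← neg_add', support_neg]
  refine (support_single_add_single_subset i j).trans ?_
  rintro k (rfl | rfl)
  · exact hi
  · exact le_trans hi (Fin.le_def.1 hij)

lemma neg_single_sub_single_mem {x : Fin n} (hx : a ≤ (x : ℕ)) :
    -Pi.single x 1 - Pi.single x 1 ∈ negRoots n a :=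
  ⟨x, x, hx, le_rfl, rfl⟩

end negRoots

theorem rev_image_posRoots_inter_posRoots_eq_empty_iff (ha : a ≤ n) :
    (· ∘ Fin.rev) '' posRoots n a ∩ posRoots n a = ∅ ↔ 2 * a ≤ n := by
  constructor
  · intro h
    by_contra! hlt
    let x : Fin n := ⟨a - 1, by omega⟩
    have hx : (x : ℕ) < a := by simp [x]; omega
    have hxrev : (x.rev : ℕ) < a := by simp [x]; omega
    refine Set.nonempty_iff_ne_empty.1 ?_ h
    refine ⟨_, ⟨_, posRoots.single_add_single_mem hx, rfl⟩, ?_⟩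
    dsimp only
    rw [Pi.add_comp, Fin.single_comp_rev]
    exact posRoots.single_add_single_mem hxrev
  · intro h
    refine comp_image_inter_eq_empty_of_support Fin.rev_involutive
      (fun v hv => ⟨(posRoots.pos hv).ne', posRoots.support_subset hv⟩)
      (fun v hv => posRoots.support_subset hv) ?_
    intro k (hk : (k : ℕ) < a) (hk' : (k.rev : ℕ) < a)
    rw [Fin.val_rev] at hk'
    omega

theorem rev_image_negRoots_inter_negRoots_eq_empty_iff :
    (· ∘ Fin.rev) '' negRoots n a ∩ negRoots n a = ∅ ↔ n ≤ 2 * a := by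
  constructor
  · intro h
    by_contra! hlt
    let x : Fin n := ⟨a, by omega⟩
    have hxrev : a ≤ (x.rev : ℕ) := by simp [x]; omega
    refine Set.nonempty_iff_ne_empty.1 ?_ h
    refine ⟨_, ⟨_, negRoots.neg_single_sub_single_mem (x := x) le_rfl, rfl⟩, ?_⟩
    dsimp only
    rw [Pi.sub_comp, Pi.neg_comp, Fin.single_comp_rev]
    exact negRoots.neg_single_sub_single_mem hxrev
  · intro h
    refine comp_image_inter_eq_empty_of_support Fin.rev_involutive
      (fun v hv => ⟨(negRoots.neg hv).ne, negRoots.support_subset hv⟩)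
      (fun v hv => negRoots.support_subset hv) ?_
    intro k (hk : a ≤ (k : ℕ)) (hk' : a ≤ (k.rev : ℕ))
    rw [Fin.val_rev] at hk'
    omega

theorem rev_image_posRoots_inter_negRoots_eq_empty :
    (· ∘ Fin.rev) '' posRoots n a ∩ negRoots n a = ∅ := by
  refine Set.eq_empty_of_forall_notMem ?_
  rintro _ ⟨⟨u, hu, rfl⟩, hv⟩
  exact (posRoots.pos hu).not_ge (Fin.rev_surjective.comp_nonpos_iff.1 (negRoots.neg hv).le)

theorem rev_image_negRoots_inter_posRoots_eq_empty :
    (· ∘ Fin.rev) '' negRoots n a ∩ posRoots n a = ∅ := by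
  refine Set.eq_empty_of_forall_notMem ?_
  rintro _ ⟨⟨u, hu, rfl⟩, hv⟩
  exact (negRoots.neg hu).not_ge (Fin.rev_surjective.comp_nonneg_iff.1 (posRoots.pos hv).le)

theorem stmt_13_general (n a : ℕ) (ha : a ≤ n)
    (e : Fin n → Fin n → ℤ)
    (he : ∀ i k, e i k = if k = i then 1 else 0)
    (Sp Sm : Set (Fin n → ℤ))
    (hSp : Sp = {v | ∃ i j : Fin n, i ≤ j ∧ (j : ℕ) < a ∧ v = e i + e j})
    (hSm : Sm = {v | ∃ i j : Fin n, a ≤ (i : ℕ) ∧ i ≤ j ∧ v = -(e i) - e j})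
    (w : (Fin n → ℤ) → (Fin n → ℤ))
    (hw : ∀ v k, w v k = v k.rev) :
    ((w '' Sp) ∩ Sp = ∅ ↔ 2 * a ≤ n) ∧
    ((w '' Sm) ∩ Sm = ∅ ↔ n ≤ 2 * a) ∧
    ((w '' Sp) ∩ Sm = ∅ ∧ (w '' Sm) ∩ Sp = ∅) := by
  obtain rfl : e = fun i => Pi.single i 1 := funext₂ fun i k => by rw [he, Pi.single_apply]
  obtain rfl : w = (· ∘ Fin.rev) := funext₂ hw
  obtain rfl : Sp = posRoots n a := hSp
  obtain rfl : Sm = negRoots n a := hSm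
  exact ⟨rev_image_posRoots_inter_posRoots_eq_empty_iff ha,
    rev_image_negRoots_inter_negRoots_eq_empty_iff,
    rev_image_posRoots_inter_negRoots_eq_empty, rev_image_negRoots_inter_posRoots_eq_empty⟩

/-- refined combinatorial core of Theorem 3.2 for `Sp(2n,ℝ)`.
`Sp = S⁺`, `Sm = S⁻`, and `w` is induced by the index reversal. -/
theorem stmt_13 (n a : ℕ) (hn : 1 ≤ n) (ha : a ≤ n)
    (e : Fin n → Fin n → ℤ)
    (he : ∀ i k, e i k = if k = i then 1 else 0)
    (Sp Sm : Set (Fin n → ℤ))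
    (hSp : Sp = {v | ∃ i j : Fin n, i ≤ j ∧ (j : ℕ) < a ∧ v = e i + e j})
    (hSm : Sm = {v | ∃ i j : Fin n, a ≤ (i : ℕ) ∧ i ≤ j ∧ v = -(e i) - e j})
    (w : (Fin n → ℤ) → (Fin n → ℤ))
    (hw : ∀ v k, w v k = v k.rev) :
    ((w '' Sp) ∩ Sp = ∅ ↔ 2 * a ≤ n) ∧
    ((w '' Sm) ∩ Sm = ∅ ↔ n ≤ 2 * a) ∧
    ((w '' Sp) ∩ Sm = ∅ ∧ (w '' Sm) ∩ Sp = ∅) :=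
  stmt_13_general n a ha e he Sp Sm hSp hSm w hw
end

section
/- Let 1 ≤ p ≤ q and let w be the permutation of {1,…,p+q} sending i ↦ p+1−i for i ≤ p and i ↦ 2p+q+1−i for i > p. Let A = {e_i − e_j : 1 ≤ i ≤ a, p+q−a+1 ≤ j ≤ p+q} and B = {−e_i + e_j : a+1 ≤ i ≤ p, p+1 ≤ j ≤ p+q−a} in ℤ^{p+q}, where 0 ≤ a ≤ p. Then: (i) w(A) ∩ A = ∅ iff 2a ≤ q; (ii) w(B) ∩ B = ∅ iff 2a ≥ p; (iii) w(A) ∩ B = w(B) ∩ A = ∅ always. -/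
/-- refined combinatorial core of Theorem 3.4 for `SU(p,q)`.
`w` is induced by the permutation reversing the first `p` and the last `q` indices
among themselves (0-based indexing). -/
theorem stmt_14 (p q a : ℕ) (hp : 1 ≤ p) (hpq : p ≤ q) (ha : a ≤ p)
    (e : Fin (p + q) → Fin (p + q) → ℤ)
    (he : ∀ i k, e i k = if k = i then 1 else 0)
    (A B : Set (Fin (p + q) → ℤ))
    (hA : A = {v | ∃ i j : Fin (p + q), (i : ℕ) < a ∧ p + q - a ≤ (j : ℕ) ∧ v = e i - e j})
    (hB : B = {v | ∃ i j : Fin (p + q), a ≤ (i : ℕ) ∧ (i : ℕ) < p ∧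
        p ≤ (j : ℕ) ∧ (j : ℕ) < p + q - a ∧ v = -(e i) + e j})
    (σ : Fin (p + q) → Fin (p + q))
    (hσ : ∀ k, (σ k : ℕ) = if (k : ℕ) < p then p - 1 - (k : ℕ) else 2 * p + q - 1 - (k : ℕ))
    (w : (Fin (p + q) → ℤ) → (Fin (p + q) → ℤ))
    (hw : ∀ v k, w v k = v (σ k)) :
    ((w '' A) ∩ A = ∅ ↔ 2 * a ≤ q) ∧
    ((w '' B) ∩ B = ∅ ↔ p ≤ 2 * a) ∧
    ((w '' A) ∩ B = ∅ ∧ (w '' B) ∩ A = ∅) := by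
  subst hA hB
  have hinv : ∀ k, σ (σ k) = k := by
    intro k
    have h1 := hσ k
    have h2 := hσ (σ k)
    have hk := k.isLt
    have hk2 := (σ k).isLt
    apply Fin.ext
    split_ifs at h1 h2 <;> omega
  have hσinj : Function.Injective σ := Function.Involutive.injective hinv
  have hσiff : ∀ x k : Fin (p+q), (σ k = x) = (k = σ x) := by
    intro x k
    apply propext
    constructor
    · rintro rfl; exact (hinv k).symm
    · rintro rfl; exact hinv x
  have hwe : ∀ x y : Fin (p+q), w (e x - e y) = e (σ x) - e (σ y) := by
    intro x y; funext k
    rw [hw]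
    simp only [Pi.sub_apply, he, hσiff]
  have hns : ∀ i j : Fin (p+q), -(e i) + e j = e j - e i :=
    fun i j => neg_add_eq_sub (e i) (e j)
  have hee : ∀ x y u v : Fin (p+q), x ≠ y → u ≠ v →
      e x - e y = e u - e v → x = u ∧ y = v := by
    intro x y u v hxy huv h
    have h1 := congrFun h x
    have h2 := congrFun h y
    simp only [Pi.sub_apply, he] at h1 h2
    rw [if_pos trivial, if_neg hxy] at h1
    rw [if_neg (Ne.symm hxy), if_pos trivial] at h2
    have hxu : x = u := by
      by_contra hne
      rw [if_neg hne] at h1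
      split_ifs at h1 <;> omega
    subst hxu
    refine ⟨rfl, ?_⟩
    by_contra hne
    rw [if_neg hne] at h2
    split_ifs at h2 <;> omega
  refine ⟨?_, ?_, ?_, ?_⟩
  · rw [Set.eq_empty_iff_forall_notMem]
    constructor
    · intro h
      by_contra hq
      push_neg at hq
      have hiv : a - 1 < p + q := by omega
      have hjv : p + q - a < p + q := by omega
      set i : Fin (p+q) := ⟨a-1, hiv⟩ with hi_def
      set j : Fin (p+q) := ⟨p+q-a, hjv⟩ with hj_def
      have hival : (i : ℕ) = a - 1 := rfl
      have hjval : (j : ℕ) = p + q - a := rfl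
      have hsi := hσ i
      have hsj := hσ j
      rw [hival, if_pos (by omega)] at hsi
      rw [hjval, if_neg (by omega)] at hsj
      exact h (w (e i - e j))
        ⟨⟨e i - e j, ⟨i, j, by omega, by omega, rfl⟩, rfl⟩,
         ⟨σ i, σ j, by omega, by omega, hwe i j⟩⟩
    · rintro hle x ⟨⟨u, ⟨i, j, hi, hj, rfl⟩, rfl⟩, i', j', hi', hj', hx2⟩
      rw [hwe] at hx2
      have hne1 : σ i ≠ σ j :=
        fun hc => (Fin.ne_of_val_ne (show (i:ℕ) ≠ (j:ℕ) by omega)) (hσinj hc)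
      have hne2 : i' ≠ j' := Fin.ne_of_val_ne (by omega)
      obtain ⟨h1, h2⟩ := hee _ _ _ _ hne1 hne2 hx2
      have hsj := hσ j
      rw [if_neg (by omega)] at hsj
      have hv := congrArg Fin.val h2
      have hjl := j.isLt
      omega
  · rw [Set.eq_empty_iff_forall_notMem]
    constructor
    · intro h
      by_contra hq
      push_neg at hq
      have hiv : a < p + q := by omega
      have hjv : p + a < p + q := by omega
      set i : Fin (p+q) := ⟨a, hiv⟩ with hi_def
      set j : Fin (p+q) := ⟨p+a, hjv⟩ with hj_def
      have hival : (i : ℕ) = a := rfl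
      have hjval : (j : ℕ) = p + a := rfl
      have hsi := hσ i
      have hsj := hσ j
      rw [hival, if_pos (by omega)] at hsi
      rw [hjval, if_neg (by omega)] at hsj
      have hwB : w (-(e i) + e j) = -(e (σ i)) + e (σ j) := by
        rw [hns, hwe, hns]
      exact h (w (-(e i) + e j))
        ⟨⟨-(e i) + e j, ⟨i, j, by omega, by omega, by omega, by omega, rfl⟩, rfl⟩,
         ⟨σ i, σ j, by omega, by omega, by omega, by omega, hwB⟩⟩
    · rintro hle x ⟨⟨u, ⟨i, j, h1, h2, h3, h4, rfl⟩, rfl⟩, i', j', h1', h2', h3', h4', hx2⟩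
      rw [hns, hwe, hns] at hx2
      have hne1 : σ j ≠ σ i :=
        fun hc => (Fin.ne_of_val_ne (show (j:ℕ) ≠ (i:ℕ) by omega)) (hσinj hc)
      have hne2 : j' ≠ i' := Fin.ne_of_val_ne (by omega)
      obtain ⟨hq1, hq2⟩ := hee _ _ _ _ hne1 hne2 hx2
      have hsi := hσ i
      rw [if_pos (by omega)] at hsi
      have hv := congrArg Fin.val hq2
      omega
  · rw [Set.eq_empty_iff_forall_notMem]
    rintro x ⟨⟨u, ⟨i, j, hi, hj, rfl⟩, rfl⟩, i', j', h1', h2', h3', h4', hx2⟩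
    rw [hwe, hns] at hx2
    have hne1 : σ i ≠ σ j :=
      fun hc => (Fin.ne_of_val_ne (show (i:ℕ) ≠ (j:ℕ) by omega)) (hσinj hc)
    have hne2 : j' ≠ i' := Fin.ne_of_val_ne (by omega)
    obtain ⟨hq1, hq2⟩ := hee _ _ _ _ hne1 hne2 hx2
    have hsi := hσ i
    rw [if_pos (by omega)] at hsi
    have hv := congrArg Fin.val hq1
    omega
  · rw [Set.eq_empty_iff_forall_notMem]
    rintro x ⟨⟨u, ⟨i, j, h1, h2, h3, h4, rfl⟩, rfl⟩, i', j', hi', hj', hx2⟩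
    rw [hns, hwe] at hx2
    have hne1 : σ j ≠ σ i :=
      fun hc => (Fin.ne_of_val_ne (show (j:ℕ) ≠ (i:ℕ) by omega)) (hσinj hc)
    have hne2 : i' ≠ j' := Fin.ne_of_val_ne (by omega)
    obtain ⟨hq1, hq2⟩ := hee _ _ _ _ hne1 hne2 hx2
    have hsj := hσ j
    rw [if_neg (by omega)] at hsj
    have hv := congrArg Fin.val hq1
    have := j.isLt
    omega
end
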